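/- Let G be a group and G₀ a subgroup of G of finite index. Then G is quasi-semi-simple if and only if G₀ is quasi-semi-simple (as a group in its own right). -/

import Mathlib

/-!
A subgroup `H ≤ G₀` has index `[G : G₀] [G₀ : H]` in `G`, and its normalizer in `G₀` lies in its
normalizer in `G`; this carries quasi-semi-simplicity from `G` down to `G₀`. Conversely, for
`K ≤ G` the intersection `K ∩ G₀` has finite index in `K`, and `N_G(K) ∩ G₀` normalizes `K ∩ G₀`,
so the conditions for `K` in `G` follow from those for `K ∩ G₀` in `G₀`.
-/

/-- A group `G` is *quasi-semi-simple* if it has no abelian subgroup of finite index,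
and for every infinite commutative subgroup `H` of infinite index, the normalizer
of `H` has infinite index in `G`.  (Index `0` means infinite index.) -/
def IsQuasiSemiSimple (G : Type*) [Group G] : Prop :=
  (∀ H : Subgroup G, (∀ x ∈ H, ∀ y ∈ H, x * y = y * x) → H.index = 0) ∧
  (∀ H : Subgroup G, (∀ x ∈ H, ∀ y ∈ H, x * y = y * x) → Infinite H → H.index = 0 →
    (Subgroup.normalizer (H : Set G)).index = 0)

open Subgroup

section

variable {G N : Type*} [Group G] [Group N]

theorem Subgroup.map_mul_comm {H : Subgroup G} (f : G →* N)
    (hH : ∀ x ∈ H, ∀ y ∈ H, x * y = y * x) :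
    ∀ x ∈ H.map f, ∀ y ∈ H.map f, x * y = y * x := by
  rintro _ ⟨a, ha, rfl⟩ _ ⟨b, hb, rfl⟩
  rw [← map_mul, ← map_mul, hH a ha b hb]

theorem Subgroup.comap_mul_comm {H : Subgroup N} {f : G →* N} (hf : Function.Injective f)
    (hH : ∀ x ∈ H, ∀ y ∈ H, x * y = y * x) :
    ∀ x ∈ H.comap f, ∀ y ∈ H.comap f, x * y = y * x :=
  fun x hx y hy => hf (by rw [map_mul, map_mul, hH _ hx _ hy])

theorem Subgroup.index_eq_zero_of_index_map_subtype_eq_zero {G₀ : Subgroup G}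
    (hG₀ : G₀.index ≠ 0) {H : Subgroup G₀} (h : (H.map G₀.subtype).index = 0) : H.index = 0 := by
  rw [index_map_subtype] at h
  exact (mul_eq_zero.mp h).resolve_right hG₀

theorem Subgroup.relIndex_eq_zero_of_index_eq_zero {H K : Subgroup G} (hK : K.index ≠ 0)
    (hH : H.index = 0) : H.relIndex K = 0 := by
  have hHK : (H ⊓ K).index = 0 := zero_dvd_iff.mp (hH ▸ index_dvd_of_le inf_le_left)
  rw [← relIndex_mul_index inf_le_right, inf_relIndex_right] at hHK
  exact (mul_eq_zero.mp hHK).resolve_right hK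

theorem Subgroup.infinite_subgroupOf_of_index_ne_zero {H K : Subgroup G} [Infinite H]
    (hK : K.index ≠ 0) : Infinite (H.subgroupOf K) := by
  have : K.FiniteIndex := ⟨hK⟩
  have : Infinite (K.subgroupOf H) := by
    rw [← not_finite_iff_infinite]
    intro hfin
    exact not_finite_iff_infinite.mpr ‹Infinite H›
      ((finite_iff_finite_and_finiteIndex (K.subgroupOf H)).mpr ⟨hfin, inferInstance⟩)
  refine Infinite.of_injective
    (fun x : K.subgroupOf H => (⟨⟨x.1.1, x.2⟩, x.1.2⟩ : H.subgroupOf K)) fun a b hab => ?_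
  ext
  exact congrArg (fun z : H.subgroupOf K => ((z : K) : G)) hab

variable {G₀ : Subgroup G}

theorem IsQuasiSemiSimple.subgroup (hG : IsQuasiSemiSimple G) (hG₀ : G₀.index ≠ 0) :
    IsQuasiSemiSimple G₀ := by
  obtain ⟨hab, hnorm⟩ := hG
  refine ⟨fun H hH => index_eq_zero_of_index_map_subtype_eq_zero hG₀ (hab _ (map_mul_comm _ hH)),
    fun H hH hinf hidx => ?_⟩
  have hmap_inf : Infinite (H.map G₀.subtype) :=
    (H.equivMapOfInjective _ G₀.subtype_injective).toEquiv.infinite_iff.mp hinf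
  have hmap_idx : (H.map G₀.subtype).index = 0 := by rw [index_map_subtype, hidx, zero_mul]
  have hN := hnorm _ (map_mul_comm _ hH) hmap_inf hmap_idx
  exact index_eq_zero_of_index_map_subtype_eq_zero hG₀
    (zero_dvd_iff.mp (hN ▸ index_dvd_of_le (le_normalizer_map _)))

theorem IsQuasiSemiSimple.of_subgroup (hG₀ : G₀.index ≠ 0) (h : IsQuasiSemiSimple G₀) :
    IsQuasiSemiSimple G := by
  obtain ⟨hab, hnorm⟩ := h
  refine ⟨fun K hK => index_eq_zero_of_relIndex_eq_zero
    (hab _ (comap_mul_comm G₀.subtype_injective hK)), fun K hK hinf hidx => ?_⟩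
  have hN := hnorm (K.subgroupOf G₀) (comap_mul_comm G₀.subtype_injective hK)
    (infinite_subgroupOf_of_index_ne_zero hG₀) (relIndex_eq_zero_of_index_eq_zero hG₀ hidx)
  exact index_eq_zero_of_relIndex_eq_zero
    (zero_dvd_iff.mp (hN ▸ index_dvd_of_le (le_normalizer_comap _)))

end

theorem quasiSemiSimple_iff_of_finiteIndex {G : Type*} [Group G] (G₀ : Subgroup G)
    (hG₀ : G₀.index ≠ 0) :
    IsQuasiSemiSimple G ↔ IsQuasiSemiSimple G₀ :=
  ⟨fun h => h.subgroup hG₀, fun h => h.of_subgroup hG₀⟩
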